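/- arXiv:2510.05333 — 4 statements merged into one kernel-verified Lean document; each statement's English description precedes it below -/
import Mathlib

section
/- Let 0 < δ ≤ π/4 and let z be a complex number with z ≠ 1, 1 − δ < |z| ≤ 1, and |arg z| < δ. Then there exists a natural number k such that (1−δ)² < |z^(2^k)| ≤ 1, |arg(z^(2^k))| ≤ 2δ, and moreover z^(2^k) fails at least one of the two conditions '1 − δ < |z^(2^k)|' and '|arg(z^(2^k))| < δ'. -/
/-!
While `w` stays in the sector `1 - δ < ‖w‖, |arg w| < δ`, squaring squares the modulus and, since
`δ ≤ π / 2`, exactly doubles the argument. So the iterates `z ^ 2 ^ k` cannot stay there forever: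
for `‖z‖ < 1` the modulus tends to `0`, and for `‖z‖ = 1`, `z ≠ 1` forces `arg z ≠ 0`, whose
doublings are unbounded. At the first escape time `k ≥ 1`, `z ^ 2 ^ k` is the square of a point of
the sector, which gives the bounds `(1 - δ) ^ 2` and `2 * δ`.
-/

open Complex Real

namespace Complex

def nearOneSector (δ : ℝ) : Set ℂ := {w | 1 - δ < ‖w‖ ∧ |arg w| < δ}

theorem arg_sq_of_abs_arg_lt {w : ℂ} (h : |arg w| < π / 2) : arg (w ^ 2) = 2 * arg w := by
  have hangle : (arg (w ^ 2) : Angle) = ((2 * arg w : ℝ) : Angle) := by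
    rw [arg_pow_coe_angle, ← Angle.coe_nsmul, two_nsmul, two_mul]
  rw [← arg_coe_angle_toReal_eq_arg, hangle, Angle.toReal_coe_eq_self_iff_mem_Ioc]
  obtain ⟨hlo, hhi⟩ := abs_lt.mp h
  constructor <;> linarith

theorem arg_pow_two_pow_of_forall_lt {z : ℂ} {k : ℕ}
    (h : ∀ j < k, |arg (z ^ 2 ^ j)| < π / 2) : arg (z ^ 2 ^ k) = 2 ^ k * arg z := by
  induction k with
  | zero => simp
  | succ k ih =>
    rw [pow_succ, pow_mul, arg_sq_of_abs_arg_lt (h k k.lt_succ_self),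
      ih fun j hj => h j (hj.trans k.lt_succ_self)]
    ring

theorem sq_lt_norm_sq_of_mem_nearOneSector {δ : ℝ} {w : ℂ} (hw : w ∈ nearOneSector δ)
    (hδ : δ ≤ 1) : (1 - δ) ^ 2 < ‖w ^ 2‖ := by
  rw [norm_pow]
  exact pow_lt_pow_left₀ hw.1 (by linarith) two_ne_zero

theorem abs_arg_sq_lt_of_mem_nearOneSector {δ : ℝ} {w : ℂ} (hw : w ∈ nearOneSector δ)
    (hδ : δ ≤ π / 2) : |arg (w ^ 2)| < 2 * δ := by
  rw [arg_sq_of_abs_arg_lt (hw.2.trans_le hδ), abs_mul, abs_two]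
  linarith [hw.2]

end Complex

open Complex

theorem exists_pow_two_pow_lt_of_lt_one {x ε : ℝ} (hx0 : 0 ≤ x) (hx1 : x < 1) (hε : 0 < ε) :
    ∃ k : ℕ, x ^ 2 ^ k < ε := by
  obtain ⟨n, hn⟩ := exists_pow_lt_of_lt_one hε hx1
  exact ⟨n, (pow_le_pow_of_le_one hx0 hx1.le n.lt_two_pow_self.le).trans_lt hn⟩

theorem exists_pow_two_pow_notMem_nearOneSector {δ : ℝ} {z : ℂ} (hδ1 : δ < 1)
    (hδπ : δ ≤ π / 2) (hz1 : z ≠ 1) (hz : ‖z‖ ≤ 1) : ∃ k : ℕ, z ^ 2 ^ k ∉ nearOneSector δ := by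
  by_contra! hmem
  rcases hz.lt_or_eq with hlt | heq
  · obtain ⟨k, hk⟩ := exists_pow_two_pow_lt_of_lt_one (norm_nonneg z) hlt (sub_pos.mpr hδ1)
    have := (hmem k).1
    rw [norm_pow] at this
    linarith
  · have harg : arg z ≠ 0 := fun h0 => hz1 (ext_norm_arg (by simp [heq]) (by simp [h0]))
    have hdouble (k : ℕ) : |arg (z ^ 2 ^ k)| = 2 ^ k * |arg z| := by
      rw [arg_pow_two_pow_of_forall_lt fun j _ => (hmem j).2.trans_le hδπ, abs_mul, abs_pow,
        abs_two]
    obtain ⟨k, hk⟩ := pow_unbounded_of_one_lt (δ / |arg z|) one_lt_two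
    rw [div_lt_iff₀ (abs_pos.mpr harg)] at hk
    linarith [(hmem k).2, hdouble k]

theorem stmt_3_general (δ : ℝ) (hδ : δ ≤ Real.pi / 4) (z : ℂ) (hz1 : z ≠ 1)
    (hlo : 1 - δ < ‖z‖) (hhi : ‖z‖ ≤ 1) (harg : |Complex.arg z| < δ) :
    ∃ k : ℕ, (1 - δ) ^ 2 < ‖z ^ (2 ^ k)‖ ∧ ‖z ^ (2 ^ k)‖ ≤ 1 ∧
      |Complex.arg (z ^ (2 ^ k))| ≤ 2 * δ ∧
      ¬(1 - δ < ‖z ^ (2 ^ k)‖ ∧ |Complex.arg (z ^ (2 ^ k))| < δ) := by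
  have hδ1 : δ < 1 := by linarith [pi_lt_four]
  have hδπ : δ ≤ π / 2 := by linarith [pi_pos]
  classical
  have hescape := exists_pow_two_pow_notMem_nearOneSector hδ1 hδπ hz1 hhi
  obtain ⟨k, hk, hmin⟩ : ∃ k : ℕ, z ^ 2 ^ k ∉ nearOneSector δ ∧
      ∀ j < k, z ^ 2 ^ j ∈ nearOneSector δ :=
    ⟨Nat.find hescape, Nat.find_spec hescape, fun j hj => not_not.mp (Nat.find_min hescape hj)⟩
  have hk0 : k ≠ 0 := by
    rintro rfl
    exact hk (by simpa using ⟨hlo, harg⟩)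
  obtain ⟨m, rfl⟩ := Nat.exists_eq_add_one_of_ne_zero hk0
  have hw : z ^ 2 ^ m ∈ nearOneSector δ := hmin m m.lt_succ_self
  have hsq : z ^ 2 ^ (m + 1) = (z ^ 2 ^ m) ^ 2 := by rw [pow_succ, pow_mul]
  refine ⟨m + 1, ?_, ?_, ?_, hk⟩
  · rw [hsq]
    exact sq_lt_norm_sq_of_mem_nearOneSector hw hδ1.le
  · rw [norm_pow]
    exact pow_le_one₀ (norm_nonneg z) hhi
  · rw [hsq]
    exact (abs_arg_sq_lt_of_mem_nearOneSector hw hδπ).le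

theorem stmt_3 (δ : ℝ) (hδ0 : 0 < δ) (hδ : δ ≤ Real.pi / 4) (z : ℂ) (hz1 : z ≠ 1)
    (hlo : 1 - δ < ‖z‖) (hhi : ‖z‖ ≤ 1) (harg : |Complex.arg z| < δ) :
    ∃ k : ℕ, (1 - δ) ^ 2 < ‖z ^ (2 ^ k)‖ ∧ ‖z ^ (2 ^ k)‖ ≤ 1 ∧
      |Complex.arg (z ^ (2 ^ k))| ≤ 2 * δ ∧
      ¬(1 - δ < ‖z ^ (2 ^ k)‖ ∧ |Complex.arg (z ^ (2 ^ k))| < δ) :=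
  stmt_3_general δ hδ z hz1 hlo hhi harg
end

section
/- Let (X, μ) be a probability space and n a natural number. For a bounded measurable function f : (Fin (n+1) → X) → ℝ define (δf)(x) = ∑_{i : Fin (n+2)} (−1)^i · f(x ∘ Fin.succAbove i) and (hf)(y) = ∫ f(Fin.cons t y) dμ(t). Then δ(hf) + h(δf) = f, i.e. integration over the first variable against μ is a contracting homotopy for the homogeneous cochain complex of bounded measurable functions. -/
/-!
In `h (δ f) x = ∫ ∑ᵢ (-1)ⁱ f ((t :: x) ∘ succAbove i) dμ(t)` the face `i = 0` deletes the
integrated variable and contributes `f x`, as `μ` is a probability measure, while the face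
`i + 1` commutes with prepending `t`, so the remaining terms integrate to `-δ (h f) x`.
-/

open MeasureTheory

theorem Measurable.finCons {α : Type*} [MeasurableSpace α] {n : ℕ} {A : Fin (n + 1) → Type*}
    [∀ i, MeasurableSpace (A i)] {f : α → A 0} {g : α → ∀ j : Fin n, A j.succ}
    (hf : Measurable f) (hg : Measurable g) :
    Measurable fun a => (Fin.cons (f a) (g a) : ∀ i, A i) :=
  measurable_pi_lambda _ fun i => i.cases hf fun j => (measurable_pi_apply j).comp hg

theorem integrable_comp_finCons_of_abs_le {X : Type*} [MeasurableSpace X] {μ : Measure X}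
    [IsFiniteMeasure μ] {n : ℕ} {f : (Fin (n + 1) → X) → ℝ} (hf : Measurable f) {M : ℝ}
    (hM : ∀ x, |f x| ≤ M) (y : Fin n → X) : Integrable (fun t => f (Fin.cons t y)) μ :=
  .of_bound (hf.comp (measurable_id.finCons measurable_const)).aestronglyMeasurable M
    (ae_of_all _ fun _ => hM _)

namespace HomogeneousCochain

variable {X : Type*} [MeasurableSpace X] {n : ℕ}

def coboundary (f : (Fin n → X) → ℝ) (x : Fin (n + 1) → X) : ℝ :=
  ∑ i : Fin (n + 1), (-1 : ℝ) ^ (i : ℕ) * f (x ∘ i.succAbove)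

noncomputable def integrateHead (μ : Measure X) (f : (Fin (n + 1) → X) → ℝ) (y : Fin n → X) :
    ℝ :=
  ∫ t, f (Fin.cons t y) ∂μ

theorem integrateHead_coboundary (μ : Measure X) [IsProbabilityMeasure μ]
    {f : (Fin (n + 1) → X) → ℝ} (hf : ∀ y : Fin n → X, Integrable (fun t => f (Fin.cons t y)) μ)
    (x : Fin (n + 1) → X) :
    integrateHead μ (coboundary f) x = f x - coboundary (integrateHead μ f) x := by
  simp_rw [integrateHead, coboundary, Fin.sum_univ_succ (n := n + 1), Fin.succAbove_zero,
    Fin.cons_comp_succ, Fin.cons_comp_succ_succAbove, Fin.val_zero, Fin.val_succ, pow_succ,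
    mul_neg_one, neg_mul, pow_zero, one_mul, Finset.sum_neg_distrib, ← sub_eq_add_neg]
  rw [integral_sub (integrable_const _) (integrable_finsetSum _ fun i _ => (hf _).const_mul _),
    integral_const, integral_finsetSum _ fun i _ => (hf _).const_mul _]
  simp_rw [integral_const_mul, probReal_univ, one_smul]
  rfl

end HomogeneousCochain

open HomogeneousCochain

theorem stmt_9 {X : Type*} [MeasurableSpace X] (μ : Measure X) [IsProbabilityMeasure μ]
    (n : ℕ) (f : (Fin (n + 1) → X) → ℝ) (hmeas : Measurable f)
    (M : ℝ) (hbdd : ∀ x, |f x| ≤ M) (x : Fin (n + 1) → X) :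
    (∑ i : Fin (n + 1), (-1 : ℝ) ^ (i : ℕ) *
        (fun y : Fin n → X => ∫ t, f (Fin.cons t y) ∂μ) (x ∘ i.succAbove)) +
      (∫ t, (∑ i : Fin (n + 2), (-1 : ℝ) ^ (i : ℕ) * f (Fin.cons t x ∘ i.succAbove)) ∂μ) =
      f x := by
  change coboundary (integrateHead μ f) x + integrateHead μ (coboundary f) x = f x
  rw [integrateHead_coboundary μ (integrable_comp_finCons_of_abs_le hmeas hbdd) x]
  ring
end

section
/- Let F : ℝ → ℝ satisfy F(1/x) = −F(x) and F(1 − x) = −F(x) for all x ∉ {0, 1}. If there exists M such that |F(y)| ≤ M for all y ∈ [1/2, 2] with y ≠ 1, then |F(x)| ≤ M for all x ∉ {0, 1}. -/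
/-!
The maps `x ↦ 1/x` and `x ↦ 1 - x` generate the anharmonic group acting on `ℝ \ {0, 1}`, and the
functional equations say that `F` only changes sign along an orbit, so `|F|` is constant on orbits.
Every orbit meets `[1/2, 2] \ {1}`: the positive part `(0, 1/2)` is moved there by `x ↦ 1 - x`,
`(2, ∞)` is moved into `(0, 1/2)` by `x ↦ 1/x`, and the negative reals are moved into `(1, ∞)`
by `x ↦ 1 - x`.
-/

open Set Relation

def AnharmonicStep (x y : ℝ) : Prop :=
  x ≠ 0 ∧ x ≠ 1 ∧ (y = 1 / x ∨ y = 1 - x)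

theorem abs_eq_of_reflTransGen_anharmonicStep {F : ℝ → ℝ}
    (hinv : ∀ x : ℝ, x ≠ 0 → x ≠ 1 → F (1 / x) = -F x)
    (hsub : ∀ x : ℝ, x ≠ 0 → x ≠ 1 → F (1 - x) = -F x)
    {x y : ℝ} (h : ReflTransGen AnharmonicStep x y) : |F y| = |F x| := by
  induction h with
  | refl => rfl
  | tail _ hstep ih =>
    obtain ⟨h0, h1, rfl | rfl⟩ := hstep
    · rw [hinv _ h0 h1, abs_neg, ih]
    · rw [hsub _ h0 h1, abs_neg, ih]

theorem exists_reflTransGen_anharmonicStep_mem_of_pos_of_lt_half {x : ℝ} (h0 : 0 < x)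
    (hx : x < 1 / 2) : ∃ y ∈ Icc (1 / 2 : ℝ) 2 \ {1}, ReflTransGen AnharmonicStep x y :=
  ⟨1 - x, ⟨⟨by linarith, by linarith⟩, by simpa using h0.ne'⟩,
    .single ⟨h0.ne', by linarith, .inr rfl⟩⟩

theorem exists_reflTransGen_anharmonicStep_mem_of_half_le {x : ℝ} (hx : 1 / 2 ≤ x)
    (hx1 : x ≠ 1) : ∃ y ∈ Icc (1 / 2 : ℝ) 2 \ {1}, ReflTransGen AnharmonicStep x y := by
  rcases le_or_gt x 2 with hx2 | hx2
  · exact ⟨x, ⟨⟨hx, hx2⟩, hx1⟩, .refl⟩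
  · have hinv_pos : 0 < 1 / x := by positivity
    have hinv_lt : 1 / x < 1 / 2 := one_div_lt_one_div_of_lt two_pos hx2
    obtain ⟨y, hy, hxy⟩ :=
      exists_reflTransGen_anharmonicStep_mem_of_pos_of_lt_half hinv_pos hinv_lt
    exact ⟨y, hy, .head ⟨by positivity, hx1, .inl rfl⟩ hxy⟩

theorem exists_reflTransGen_anharmonicStep_mem {x : ℝ} (hx0 : x ≠ 0) (hx1 : x ≠ 1) :
    ∃ y ∈ Icc (1 / 2 : ℝ) 2 \ {1}, ReflTransGen AnharmonicStep x y := by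
  rcases lt_or_gt_of_ne hx0 with hneg | hpos
  · obtain ⟨y, hy, hxy⟩ :=
      exists_reflTransGen_anharmonicStep_mem_of_half_le (x := 1 - x) (by linarith)
        (by simpa using hx0)
    exact ⟨y, hy, .head ⟨hx0, hx1, .inr rfl⟩ hxy⟩
  · rcases lt_or_ge x (1 / 2) with hx | hx
    · exact exists_reflTransGen_anharmonicStep_mem_of_pos_of_lt_half hpos hx
    · exact exists_reflTransGen_anharmonicStep_mem_of_half_le hx hx1

theorem stmt_13 (F : ℝ → ℝ)
    (hinv : ∀ x : ℝ, x ≠ 0 → x ≠ 1 → F (1 / x) = -F x)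
    (hsub : ∀ x : ℝ, x ≠ 0 → x ≠ 1 → F (1 - x) = -F x)
    (M : ℝ) (hM : ∀ y ∈ Set.Icc (1/2 : ℝ) 2, y ≠ 1 → |F y| ≤ M) :
    ∀ x : ℝ, x ≠ 0 → x ≠ 1 → |F x| ≤ M := by
  intro x hx0 hx1
  obtain ⟨y, ⟨hy, hy1⟩, hxy⟩ := exists_reflTransGen_anharmonicStep_mem hx0 hx1
  rw [← abs_eq_of_reflTransGen_anharmonicStep hinv hsub hxy]
  exact hM y hy hy1
end

section
/- Let α be a type, g : α → α, S and T subsets of α with the following properties for constants C, M ≥ 0 and a function F : α → ℝ: (i) for every z ∈ S, |2·F(z) − F(g(z))| ≤ C; (ii) for every z ∈ S there exists k such that g^[j](z) ∈ S for all j < k and g^[k](z) ∈ T \ S; (iii) |F(w)| ≤ M for all w ∈ T \ S. Then |F(z)| ≤ M + C for every z ∈ S. -/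
theorem abs_two_pow_mul_sub_iterate_le {α : Type*} {g : α → α} {S : Set α} {F : α → ℝ} {C : ℝ}
    (h : ∀ z ∈ S, |2 * F z - F (g z)| ≤ C) :
    ∀ (k : ℕ) (z : α), (∀ j < k, g^[j] z ∈ S) → |2 ^ k * F z - F (g^[k] z)| ≤ (2 ^ k - 1) * C
  | 0, z, _ => by simp
  | k + 1, z, hz => by
    have hgz : ∀ j < k, g^[j] (g z) ∈ S := fun j hj => hz (j + 1) (by omega)
    have hstep : |2 * F z - F (g z)| ≤ C := h z (hz 0 k.succ_pos)
    have htail := abs_two_pow_mul_sub_iterate_le h k (g z) hgz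
    calc |2 ^ (k + 1) * F z - F (g^[k + 1] z)|
        = |2 ^ k * (2 * F z - F (g z)) + (2 ^ k * F (g z) - F (g^[k] (g z)))| := by
          rw [Function.iterate_succ_apply]; ring_nf
      _ ≤ 2 ^ k * |2 * F z - F (g z)| + |2 ^ k * F (g z) - F (g^[k] (g z))| := by
          refine (abs_add_le _ _).trans_eq ?_
          rw [abs_mul, abs_of_pos (pow_pos two_pos k : (0 : ℝ) < 2 ^ k)]
      _ ≤ 2 ^ k * C + (2 ^ k - 1) * C := by gcongr
      _ = (2 ^ (k + 1) - 1) * C := by ring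

theorem stmt_14_general {α : Type*} (g : α → α) (S T : Set α) (C M : ℝ)
    (F : α → ℝ)
    (h1 : ∀ z ∈ S, |2 * F z - F (g z)| ≤ C)
    (h2 : ∀ z ∈ S, ∃ k : ℕ, (∀ j < k, g^[j] z ∈ S) ∧ g^[k] z ∈ T \ S)
    (h3 : ∀ w ∈ T \ S, |F w| ≤ M) :
    ∀ z ∈ S, |F z| ≤ M + C := by
  intro z hz
  obtain ⟨k, horbit, hexit⟩ := h2 z hz
  have hC : 0 ≤ C := (abs_nonneg _).trans (h1 z hz)
  have hexitF : |F (g^[k] z)| ≤ M := h3 _ hexit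
  have hM : 0 ≤ M := (abs_nonneg _).trans hexitF
  have hpow : (1 : ℝ) ≤ 2 ^ k := one_le_pow₀ one_le_two
  have hscaled : 2 ^ k * |F z| ≤ 2 ^ k * (M + C) :=
    calc 2 ^ k * |F z| = |2 ^ k * F z - F (g^[k] z) + F (g^[k] z)| := by
          rw [sub_add_cancel, abs_mul, abs_of_pos (pow_pos two_pos k : (0 : ℝ) < 2 ^ k)]
      _ ≤ (2 ^ k - 1) * C + M :=
          (abs_add_le _ _).trans (add_le_add (abs_two_pow_mul_sub_iterate_le h1 k z horbit) hexitF)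
      _ ≤ 2 ^ k * (M + C) := by nlinarith
  exact le_of_mul_le_mul_left hscaled (by positivity)

theorem stmt_14 {α : Type*} (g : α → α) (S T : Set α) (C M : ℝ) (hC : 0 ≤ C) (hM : 0 ≤ M)
    (F : α → ℝ)
    (h1 : ∀ z ∈ S, |2 * F z - F (g z)| ≤ C)
    (h2 : ∀ z ∈ S, ∃ k : ℕ, (∀ j < k, g^[j] z ∈ S) ∧ g^[k] z ∈ T \ S)
    (h3 : ∀ w ∈ T \ S, |F w| ≤ M) :
    ∀ z ∈ S, |F z| ≤ M + C :=
  stmt_14_general g S T C M F h1 h2 h3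
end
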